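/- An abstract rewriting system that is both algebraically terminating and exponentiation free is quasi-terminating. Here we model this abstractly: let → be a rewriting relation on a set A with a monoid of 'contexts' acting on A; if every infinite reduction sequence (a_n) contains indices k < k+l with a_{k+l} = C·a_k for some (possibly trivial) context C, and no reduction path goes from a to C·a for a nontrivial context C, then every infinite reduction sequence contains some element infinitely often. -/

import Mathlib

/-!
If no element recurs infinitely often in a reduction sequence, jumping each time past the last
occurrence of the current element yields an injective reduction sequence. Algebraic termination
gives `g (k + l) = C • g k` in it; injectivity rules out `C = 1`, and the reduction path from
`g k` to `C • g k` contradicts exponentiation freeness.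
-/

open Relation

section ReductionSequence

variable {A : Type*} {r : A → A → Prop}

theorem Relation.ReflTransGen.of_seq {g : ℕ → A} (hg : ∀ n, r (g n) (g (n + 1))) (k l : ℕ) :
    ReflTransGen r (g k) (g (k + l)) :=
  (reflTransGen_of_succ_of_le (fun i j => r (g i) (g j)) (fun i _ => hg i) (by omega)).lift g
    fun _ _ h => h

theorem exists_injective_reduction_seq_of_finite_fibers {f : ℕ → A} (hf : ∀ n, r (f n) (f (n + 1)))
    (hfin : ∀ a, {n | f n = a}.Finite) :
    ∃ g : ℕ → A, (∀ n, r (g n) (g (n + 1))) ∧ Function.Injective g := by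
  have hlast : ∀ i, ∃ j, f j = f i ∧ ∀ n, f n = f i → n ≤ j := fun i =>
    ⟨sSup {n | f n = f i}, Nat.sSup_mem (s := {n | f n = f i}) ⟨i, rfl⟩ (hfin _).bddAbove,
      fun _ hn => le_csSup (hfin _).bddAbove hn⟩
  choose last hlast_eq hlast_max using hlast
  let m : ℕ → ℕ := fun n => Nat.rec 0 (fun _ k => last k + 1) n
  have hm_succ : ∀ n, m (n + 1) = last (m n) + 1 := fun _ => rfl
  have hm : StrictMono m := strictMono_nat_of_lt_succ fun n => by
    rw [hm_succ]
    exact Nat.lt_succ_of_le (hlast_max _ _ rfl)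
  have hne : ∀ i j, i < j → f (m j) ≠ f (m i) := fun i j hij heq => by
    have hgt : last (m i) < m j := (hm_succ i ▸ hm.monotone hij : last (m i) + 1 ≤ m j)
    exact absurd (hlast_max _ _ heq) (not_le.mpr hgt)
  refine ⟨f ∘ m, fun n => ?_, fun i j heq => ?_⟩
  · simpa only [Function.comp_apply, hm_succ, hlast_eq] using hf (last (m n))
  · rcases lt_trichotomy i j with hij | rfl | hij
    · exact absurd heq.symm (hne i j hij)
    · rfl
    · exact absurd heq (hne j i hij)

end ReductionSequence

/-- Algebraic termination + exponentiation freeness implies quasi-termination,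
in the abstract setting of a monoid of contexts acting on the objects. -/
theorem quasiTerminating_of_algTerminating_of_expFree
    {M : Type*} [Monoid M] {A : Type*} [MulAction M A] (r : A → A → Prop)
    -- algebraically terminating:
    (halg : ∀ f : ℕ → A, (∀ n, r (f n) (f (n + 1))) →
      ∃ k l, 1 ≤ l ∧ ∃ C : M, f (k + l) = C • f k)
    -- exponentiation free:
    (hexp : ∀ (a : A) (C : M), C ≠ 1 → ¬ ReflTransGen r a (C • a)) :
    -- quasi-terminating:
    ∀ f : ℕ → A, (∀ n, r (f n) (f (n + 1))) → ∃ a, {n : ℕ | f n = a}.Infinite := by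
  intro f hf
  by_contra! hfin
  obtain ⟨g, hg, hinj⟩ := exists_injective_reduction_seq_of_finite_fibers hf hfin
  obtain ⟨k, l, hl, C, hC⟩ := halg g hg
  have hC1 : C ≠ 1 := by
    rintro rfl
    rw [one_smul] at hC
    exact absurd (hinj hC) (by omega)
  exact hexp (g k) C hC1 (hC ▸ ReflTransGen.of_seq hg k l)
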